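/- If (X, d) is a complete metric space with basepoint x_0 and Φ is a regular symmetric norm, then S_Φ(X, x_0) is a complete metric space. -/

import Mathlib

/-!
Pass to a subsequence with `d_Φ(S_k, S_{k+1}) < 2^{-k}`. An enumeration that lists the basepoint
infinitely often can be permuted into any other such enumeration of the same multiset, so a
nearly optimal pairing of `S_k` with `S_{k+1}` can be realised starting from the enumeration of
`S_k` chosen at the previous step. This gives enumerations `u_k` of `S_k` with
`Φ(d(u_k, u_{k+1})) ≤ 2^{-k}`. Each coordinate sequence `(u_k(i))_k` is then Cauchy in `X`; its
limit `v` enumerates the limit multiset, and since the truncated norms are continuous in each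
coordinate, `Φ(d(u_k, v)) ≤ 2^{1-k}`.
-/

open Filter

/-- A symmetric norm: a norm on the space `c_00` of finitely supported real
sequences (modelled as `ℕ →₀ ℝ`), normalised by `Φ(1,0,0,…) = 1`, and invariant
under permutations of the entries and under replacing entries by their absolute
values. -/
structure SymmetricNorm where
  toFun : (ℕ →₀ ℝ) → ℝ
  nonneg : ∀ ξ, 0 ≤ toFun ξ
  eq_zero : ∀ ξ, toFun ξ = 0 → ξ = 0
  add_le : ∀ ξ η, toFun (ξ + η) ≤ toFun ξ + toFun η
  smul_eq : ∀ (c : ℝ) (ξ), toFun (c • ξ) = |c| * toFun ξ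
  norm_single : toFun (Finsupp.single 0 1) = 1
  perm_invariant : ∀ (π : Equiv.Perm ℕ) (ξ), toFun (Finsupp.equivMapDomain π ξ) = toFun ξ
  abs_invariant : ∀ (ξ : ℕ →₀ ℝ), toFun (Finsupp.mapRange (fun a => |a|) abs_zero ξ) = toFun ξ

/-- The truncation `(ξ_0, …, ξ_{n-1}, 0, 0, …)` of a sequence, as an element of `c_00`. -/
noncomputable def truncF (ξ : ℕ → ℝ) (n : ℕ) : ℕ →₀ ℝ :=
  ∑ i ∈ Finset.range n, Finsupp.single i (ξ i)

/-- The extension of a symmetric norm to sequences: `Φ(ξ) = lim_n Φ(ξ_0,…,ξ_{n-1},0,0,…)`. -/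
noncomputable def SymmetricNorm.ext (Φ : SymmetricNorm) (ξ : ℕ → ℝ) : ℝ :=
  limUnder atTop fun n => Φ.toFun (truncF ξ n)

/-- Membership in the natural domain `ℓ_Φ`: the sequence tends to `0` and the
`Φ`-norms of its truncations converge. -/
def MemLPhi (Φ : SymmetricNorm) (ξ : ℕ → ℝ) : Prop :=
  Tendsto ξ atTop (nhds 0) ∧ ∃ L, Tendsto (fun n => Φ.toFun (truncF ξ n)) atTop (nhds L)

/-- Membership in `ℓ_Φ^+`: nonnegative `Φ`-summable sequences. -/
def MemLPhiPlus (Φ : SymmetricNorm) (ξ : ℕ → ℝ) : Prop :=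
  (∀ i, 0 ≤ ξ i) ∧ MemLPhi Φ ξ

/-- A symmetric norm is regular if `Φ(ξ_{n+1}, ξ_{n+2}, …) → 0` for every `ξ ∈ ℓ_Φ`. -/
def SymmetricNorm.Regular (Φ : SymmetricNorm) : Prop :=
  ∀ ξ : ℕ → ℝ, MemLPhi Φ ξ →
    Tendsto (fun n => Φ.ext fun i => ξ (n + i)) atTop (nhds 0)

/-- `partialMax ξ k` is the supremum of sums of `k` distinct entries of `ξ`;
for nonnegative `ξ ∈ c_0` this equals `ξ^↓_1 + ⋯ + ξ^↓_k`. -/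
noncomputable def partialMax (ξ : ℕ → ℝ) (k : ℕ) : ℝ :=
  sSup ((fun s : Finset ℕ => ∑ i ∈ s, ξ i) '' {s | s.card = k})

/-- The nonincreasing rearrangement `ξ^↓` of a (nonnegative, null) sequence,
defined via `ξ^↓_1 = max ξ_i`, `ξ^↓_1 + ξ^↓_2 = max_{i ≠ j} (ξ_i + ξ_j)`, …. -/
noncomputable def decRearr (ξ : ℕ → ℝ) (k : ℕ) : ℝ :=
  partialMax ξ (k + 1) - partialMax ξ k
open scoped Classical

variable {X : Type*} [MetricSpace X]

/-- `s : ℕ → X` is an enumeration of the countable multiset `S` in `(X, x₀)`: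
every point other than the basepoint occurs in `s` exactly according to its
multiplicity in `S`. -/
def IsEnum (x0 : X) (S : X → ℕ∞) (s : ℕ → X) : Prop :=
  ∀ x, x ≠ x0 → S x = {i : ℕ | s i = x}.encard

/-- A countable multiset in `(X, x₀)`: a multiplicity function in which the
basepoint is the only point of infinite multiplicity and whose support is
countable. -/
def IsCMultiset (x0 : X) (S : X → ℕ∞) : Prop :=
  S x0 = ⊤ ∧ (∀ x, x ≠ x0 → S x ≠ ⊤) ∧ {x | S x ≠ 0}.Countable

/-- Membership in `S_Φ(X, x₀)`: a countable multiset whose points `s_i` satisfy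
`(d(x₀, s_i))_i ∈ ℓ_Φ`. -/
def MemSPhi (Φ : SymmetricNorm) (x0 : X) (S : X → ℕ∞) : Prop :=
  IsCMultiset x0 S ∧ ∃ s : ℕ → X, IsEnum x0 S s ∧ MemLPhi Φ fun i => dist x0 (s i)

/-- The distance `d_Φ(S, T)`: the infimum over pairs of enumerations `(s_i), (t_i)`
of `S, T` of `Φ(d(s_1,t_1), d(s_2,t_2), …)`. -/
noncomputable def dPhi (Φ : SymmetricNorm) (x0 : X) (S T : X → ℕ∞) : ℝ :=
  sInf {r | ∃ s t : ℕ → X, IsEnum x0 S s ∧ IsEnum x0 T t ∧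
    MemLPhi Φ (fun i => dist (s i) (t i)) ∧ r = Φ.ext fun i => dist (s i) (t i)}

/-- The sum of two multisets (addition of multiplicities away from the basepoint). -/
noncomputable def msum (x0 : X) (S T : X → ℕ∞) : X → ℕ∞ := fun x => if x = x0 then ⊤ else S x + T x

/-- The difference of two multisets (subtraction of multiplicities away from the
basepoint). -/
noncomputable def mdiff (x0 : X) (S T : X → ℕ∞) : X → ℕ∞ := fun x => if x = x0 then ⊤ else S x - T x

/-- The intersection of a multiset with a subset `V ⊆ X`. -/
noncomputable def minter (x0 : X) (S : X → ℕ∞) (V : Set X) : X → ℕ∞ :=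
  fun x => if x = x0 then ⊤ else if x ∈ V then S x else 0

/-- The multiset `S` has rank `n`: its total multiplicity away from the basepoint
is `n`, i.e. its non-basepoint part can be listed by a tuple of length `n`. -/
def HasRank (x0 : X) (S : X → ℕ∞) (n : ℕ) : Prop :=
  ∃ f : Fin n → X, (∀ i, f i ≠ x0) ∧ ∀ x, x ≠ x0 → S x = {i : Fin n | f i = x}.encard

namespace SymmetricNorm

variable (Φ : SymmetricNorm)

lemma toFun_zero : Φ.toFun 0 = 0 := by
  simpa using Φ.smul_eq 0 0

lemma toFun_single (j : ℕ) (a : ℝ) : Φ.toFun (Finsupp.single j a) = |a| := by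
  have hswap : Finsupp.equivMapDomain (Equiv.swap 0 j) (Finsupp.single 0 a) =
      Finsupp.single j a := by
    rw [Finsupp.equivMapDomain_single, Equiv.swap_apply_left]
  rw [← hswap, Φ.perm_invariant, ← mul_one a, ← smul_eq_mul, ← Finsupp.smul_single, Φ.smul_eq,
    Φ.norm_single, smul_eq_mul, mul_one, mul_one]

lemma toFun_sum_le {α : Type*} (F : Finset α) (f : α → ℕ →₀ ℝ) :
    Φ.toFun (∑ i ∈ F, f i) ≤ ∑ i ∈ F, Φ.toFun (f i) := by
  induction F using Finset.induction_on with
  | empty => simp [toFun_zero]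
  | insert j F hj ih =>
    rw [Finset.sum_insert hj, Finset.sum_insert hj]
    exact (Φ.add_le _ _).trans (by linarith)

lemma toFun_neg_update (ξ : ℕ →₀ ℝ) (j : ℕ) (b : ℝ) :
    Φ.toFun (ξ.update j (-b)) = Φ.toFun (ξ.update j b) := by
  rw [← Φ.abs_invariant (ξ.update j (-b)), ← Φ.abs_invariant (ξ.update j b)]
  congr 1
  ext i
  simp only [Finsupp.mapRange_apply, Finsupp.update_apply]
  split_ifs <;> simp

/-- `ξ.update j a` is a convex combination of `ξ.update j b` and `ξ.update j (-b)`. -/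
lemma toFun_update_le (ξ : ℕ →₀ ℝ) (j : ℕ) {a b : ℝ} (hab : |a| ≤ |b|) :
    Φ.toFun (ξ.update j a) ≤ Φ.toFun (ξ.update j b) := by
  rcases eq_or_ne b 0 with rfl | hb
  · rw [abs_eq_zero.1 (le_antisymm (by simpa using hab) (abs_nonneg a))]
  obtain ⟨hlo, hhi⟩ := abs_le.1 (show |a / b| ≤ 1 by
    rw [abs_div]; exact div_le_one_of_le₀ hab (abs_nonneg b))
  obtain ⟨t, ht, ht0, ht1⟩ : ∃ t : ℝ, t = (1 + a / b) / 2 ∧ 0 ≤ t ∧ 0 ≤ 1 - t :=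
    ⟨_, rfl, by linarith, by linarith⟩
  have hcomb : ξ.update j a = t • ξ.update j b + (1 - t) • ξ.update j (-b) := by
    ext i
    simp only [Finsupp.add_apply, Finsupp.smul_apply, Finsupp.update_apply, smul_eq_mul]
    split_ifs
    · rw [ht]; field_simp; ring
    · ring
  calc Φ.toFun (ξ.update j a)
      ≤ Φ.toFun (t • ξ.update j b) + Φ.toFun ((1 - t) • ξ.update j (-b)) := by
        rw [hcomb]; exact Φ.add_le _ _
    _ = Φ.toFun (ξ.update j b) := by
        rw [Φ.smul_eq, Φ.smul_eq, toFun_neg_update, abs_of_nonneg ht0, abs_of_nonneg ht1]; ring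

lemma toFun_le_of_abs_le {ξ η : ℕ →₀ ℝ} (h : ∀ i, |ξ i| ≤ |η i|) : Φ.toFun ξ ≤ Φ.toFun η := by
  suffices ∀ F : Finset ℕ, ∀ ξ : ℕ →₀ ℝ, (∀ i, |ξ i| ≤ |η i|) → (∀ i ∉ F, ξ i = η i) →
      Φ.toFun ξ ≤ Φ.toFun η from
    this (ξ.support ∪ η.support) ξ h fun i hi => by simp_all
  intro F
  induction F using Finset.induction_on with
  | empty =>
    intro ξ _ hout
    rw [Finsupp.ext fun i => hout i (Finset.notMem_empty i)]
  | insert j F hj ih =>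
    intro ξ h hout
    calc Φ.toFun ξ = Φ.toFun (ξ.update j (ξ j)) := by rw [Finsupp.update_self]
      _ ≤ Φ.toFun (ξ.update j (η j)) := Φ.toFun_update_le ξ j (h j)
      _ ≤ Φ.toFun η := by
        refine ih _ (fun i => ?_) (fun i hi => ?_) <;> rw [Finsupp.update_apply] <;>
          split_ifs with hij
        · rw [hij]
        · exact h i
        · rw [hij]
        · exact hout i (by simp [hij, hi])

end SymmetricNorm

lemma truncF_apply (ξ : ℕ → ℝ) (n j : ℕ) : truncF ξ n j = if j < n then ξ j else 0 := by
  simp [truncF, Finsupp.finsetSum_apply, Finsupp.single_apply]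

lemma truncF_succ (ξ : ℕ → ℝ) (n : ℕ) :
    truncF ξ (n + 1) = truncF ξ n + Finsupp.single n (ξ n) :=
  Finset.sum_range_succ _ n

lemma exists_perm_eqOn (F : Finset ℕ) {g : ℕ → ℕ} (hg : Set.InjOn g F) :
    ∃ π : Equiv.Perm ℕ, ∀ i ∈ F, π i = g i := by
  set T := F ∪ F.image g
  obtain ⟨e, he⟩ := Set.MapsTo.exists_equiv_extend_of_card_eq (α := T) (t := T)
    (s := {x | x.1 ∈ F}) (f := fun x => g x) (by simp)
    (fun x hx => by simp [T]; exact Or.inr ⟨x, hx, rfl⟩)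
    (fun x hx y hy hxy => Subtype.ext (hg hx hy hxy))
  refine ⟨Equiv.Perm.ofSubtype e, fun i hi => ?_⟩
  have hiT : i ∈ T := Finset.mem_union_left _ hi
  exact (Equiv.Perm.ofSubtype_apply_of_mem e hiT).trans (he ⟨i, hiT⟩ hi)

def interleave {α : Type*} (a : α) (s : ℕ → α) : ℕ → α :=
  fun i => if i % 2 = 0 then s (i / 2) else a

lemma truncF_interleave_zero (ξ : ℕ → ℝ) (m : ℕ) :
    truncF (interleave 0 ξ) (2 * m) = ∑ j ∈ Finset.range m, Finsupp.single (2 * j) (ξ j) := by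
  induction m with
  | zero => rfl
  | succ m ih =>
    rw [show 2 * (m + 1) = 2 * m + 1 + 1 by ring, truncF_succ, truncF_succ, ih,
      Finset.sum_range_succ]
    simp [interleave]

namespace SymmetricNorm

variable (Φ : SymmetricNorm)

lemma toFun_truncF_le_sum_abs (ξ : ℕ → ℝ) (n : ℕ) :
    Φ.toFun (truncF ξ n) ≤ ∑ i ∈ Finset.range n, |ξ i| :=
  (Φ.toFun_sum_le _ _).trans (Finset.sum_le_sum fun i _ => (Φ.toFun_single i _).le)

lemma toFun_truncF_le_of_abs_le {ξ η : ℕ → ℝ} (h : ∀ i, |ξ i| ≤ |η i|) (n : ℕ) :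
    Φ.toFun (truncF ξ n) ≤ Φ.toFun (truncF η n) :=
  Φ.toFun_le_of_abs_le fun i => by rw [truncF_apply, truncF_apply]; split_ifs <;> simp [h i]

lemma monotone_toFun_truncF (ξ : ℕ → ℝ) : Monotone fun n => Φ.toFun (truncF ξ n) :=
  fun n m hnm => Φ.toFun_le_of_abs_le fun i => by
    rw [truncF_apply, truncF_apply]; split_ifs <;> first | omega | simp

lemma abs_le_toFun_truncF (ξ : ℕ → ℝ) {i n : ℕ} (hi : i < n) : |ξ i| ≤ Φ.toFun (truncF ξ n) := by
  rw [← Φ.toFun_single i]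
  exact Φ.toFun_le_of_abs_le fun j => by
    rw [Finsupp.single_apply, truncF_apply]; split_ifs <;> first | omega | simp_all

lemma toFun_truncF_le_add {ζ β γ : ℕ → ℝ} (hζ : ∀ i, 0 ≤ ζ i) (hle : ∀ i, ζ i ≤ β i + γ i)
    (n : ℕ) : Φ.toFun (truncF ζ n) ≤ Φ.toFun (truncF β n) + Φ.toFun (truncF γ n) := by
  have hsum : truncF (fun i => β i + γ i) n = truncF β n + truncF γ n := by
    ext j; simp only [truncF_apply, Finsupp.add_apply]; split_ifs <;> simp
  calc Φ.toFun (truncF ζ n) ≤ Φ.toFun (truncF (fun i => β i + γ i) n) :=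
        Φ.toFun_truncF_le_of_abs_le (fun i => (abs_of_nonneg (hζ i)).trans_le
          ((hle i).trans (le_abs_self _))) n
    _ ≤ _ := hsum ▸ Φ.add_le _ _

lemma ext_eq_of_tendsto {ξ : ℕ → ℝ} {L : ℝ}
    (h : Tendsto (fun n => Φ.toFun (truncF ξ n)) atTop (nhds L)) : Φ.ext ξ = L :=
  h.limUnder_eq

lemma tendsto_toFun_truncF {ξ : ℕ → ℝ} (h : MemLPhi Φ ξ) :
    Tendsto (fun n => Φ.toFun (truncF ξ n)) atTop (nhds (Φ.ext ξ)) := by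
  obtain ⟨-, L, hL⟩ := h
  rwa [Φ.ext_eq_of_tendsto hL]

lemma toFun_truncF_le_ext {ξ : ℕ → ℝ} (h : MemLPhi Φ ξ) (n : ℕ) :
    Φ.toFun (truncF ξ n) ≤ Φ.ext ξ :=
  (Φ.monotone_toFun_truncF ξ).ge_of_tendsto (Φ.tendsto_toFun_truncF h) n

lemma ext_nonneg {ξ : ℕ → ℝ} (h : MemLPhi Φ ξ) : 0 ≤ Φ.ext ξ :=
  (Φ.nonneg _).trans (Φ.toFun_truncF_le_ext h 0)

lemma memLPhi_of_toFun_truncF_le {ξ : ℕ → ℝ} (hξ : Tendsto ξ atTop (nhds 0)) {B : ℝ}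
    (hB : ∀ n, Φ.toFun (truncF ξ n) ≤ B) : MemLPhi Φ ξ ∧ Φ.ext ξ ≤ B :=
  have h := tendsto_atTop_ciSup (Φ.monotone_toFun_truncF ξ) ⟨B, Set.forall_mem_range.2 hB⟩
  ⟨⟨hξ, _, h⟩, Φ.ext_eq_of_tendsto h ▸ ciSup_le hB⟩

lemma memLPhi_of_le_add {ζ β γ : ℕ → ℝ}
    (hζ : Tendsto ζ atTop (nhds 0)) (hζ0 : ∀ i, 0 ≤ ζ i) (hle : ∀ i, ζ i ≤ β i + γ i)
    {B₁ B₂ : ℝ} (hβ : ∀ n, Φ.toFun (truncF β n) ≤ B₁) (hγ : ∀ n, Φ.toFun (truncF γ n) ≤ B₂) :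
    MemLPhi Φ ζ ∧ Φ.ext ζ ≤ B₁ + B₂ :=
  Φ.memLPhi_of_toFun_truncF_le hζ fun n =>
    (Φ.toFun_truncF_le_add hζ0 hle n).trans (add_le_add (hβ n) (hγ n))

lemma toFun_sum_single_comp (F : Finset ℕ) {g : ℕ → ℕ} (hg : Set.InjOn g F) (ζ : ℕ → ℝ) :
    Φ.toFun (∑ i ∈ F, Finsupp.single (g i) (ζ i)) = Φ.toFun (∑ i ∈ F, Finsupp.single i (ζ i)) := by
  obtain ⟨π, hπ⟩ := exists_perm_eqOn F hg
  rw [← Φ.perm_invariant π (∑ i ∈ F, Finsupp.single i (ζ i)), ← Finsupp.domCongr_apply, map_sum]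
  refine congrArg Φ.toFun (Finset.sum_congr rfl fun i hi => ?_)
  rw [Finsupp.domCongr_apply, Finsupp.equivMapDomain_single, hπ i hi]

lemma toFun_sum_single_le_ext {ξ : ℕ → ℝ} (h : MemLPhi Φ ξ) (F : Finset ℕ) :
    Φ.toFun (∑ i ∈ F, Finsupp.single i (ξ i)) ≤ Φ.ext ξ := by
  have hF : ∀ i ∈ F, i < F.sup id + 1 := fun i hi => Nat.lt_succ_of_le (Finset.le_sup (f := id) hi)
  refine (Φ.toFun_le_of_abs_le fun j => ?_).trans (Φ.toFun_truncF_le_ext h (F.sup id + 1))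
  simp only [Finsupp.finsetSum_apply, Finsupp.single_apply, Finset.sum_ite_eq', truncF_apply]
  by_cases hj : j ∈ F
  · simp [hj, hF j hj]
  · simp [hj]

lemma memLPhi_comp_perm {ξ : ℕ → ℝ} (h : MemLPhi Φ ξ) (σ : Equiv.Perm ℕ) :
    MemLPhi Φ (fun i => ξ (σ i)) ∧ Φ.ext (fun i => ξ (σ i)) ≤ Φ.ext ξ := by
  refine Φ.memLPhi_of_toFun_truncF_le (ξ := fun i => ξ (σ i)) (h.1.comp ?_) fun n => ?_
  · rw [← Nat.cofinite_eq_atTop]; exact σ.injective.tendsto_cofinite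
  · rw [truncF, ← Φ.toFun_sum_single_comp _ σ.injective.injOn,
      ← Finset.sum_image (f := fun j => Finsupp.single j (ξ j)) σ.injective.injOn]
    exact Φ.toFun_sum_single_le_ext h _

lemma memLPhi_interleave_zero {ξ : ℕ → ℝ} (h : MemLPhi Φ ξ) :
    MemLPhi Φ (interleave 0 ξ) ∧ Φ.ext (interleave 0 ξ) = Φ.ext ξ := by
  have htrunc : ∀ m, Φ.toFun (truncF (interleave 0 ξ) (2 * m)) = Φ.toFun (truncF ξ m) := fun m => by
    rw [truncF_interleave_zero, truncF,
      Φ.toFun_sum_single_comp _ fun i _ j _ hij => by simpa using hij]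
  have hnull : Tendsto (interleave 0 ξ) atTop (nhds 0) := by
    refine squeeze_zero_norm (fun i => ?_)
      (by simpa using (h.1.comp (Nat.tendsto_div_const_atTop two_ne_zero)).norm)
    unfold interleave; split_ifs <;> simp
  obtain ⟨hmem, -⟩ := Φ.memLPhi_of_toFun_truncF_le hnull fun n =>
    ((Φ.monotone_toFun_truncF _ (by omega : n ≤ 2 * n)).trans_eq (htrunc n)).trans
      (Φ.toFun_truncF_le_ext h n)
  refine ⟨hmem, tendsto_nhds_unique ?_ (Φ.tendsto_toFun_truncF h)⟩
  have hdouble : Tendsto (2 * ·) atTop atTop := tendsto_id.const_mul_atTop' two_pos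
  simpa only [Function.comp_def, htrunc] using (Φ.tendsto_toFun_truncF hmem).comp hdouble

end SymmetricNorm

lemma nonempty_equiv_of_encard_eq {A B : Set ℕ} (h : A.encard = B.encard) : Nonempty (A ≃ B) :=
  Cardinal.eq.1 <| Cardinal.toENat_injOn (Cardinal.mk_le_aleph0 (α := A))
    (Cardinal.mk_le_aleph0 (α := B)) h

section Enumerations

variable {α : Type*} {x0 : α} {S : α → ℕ∞}

lemma IsEnum.interleave {s : ℕ → α} (h : IsEnum x0 S s) :
    IsEnum x0 S (_root_.interleave x0 s) := by
  intro x hx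
  have : {i | _root_.interleave x0 s i = x} = (2 * ·) '' {i | s i = x} := by
    ext i
    simp only [_root_.interleave, Set.mem_ofPred_eq, Set.mem_image]
    split_ifs with hi
    · exact ⟨fun h => ⟨i / 2, h, by omega⟩, by rintro ⟨j, hj, rfl⟩; simpa using hj⟩
    · exact ⟨fun h => absurd h.symm hx, by rintro ⟨j, -, rfl⟩; omega⟩
  rw [h x hx, this, (mul_right_injective₀ two_ne_zero).encard_image]

lemma infinite_setOf_interleave_eq (x0 : α) (s : ℕ → α) :
    {i | interleave x0 s i = x0}.Infinite :=
  Set.infinite_of_injective_forall_mem (f := (2 * · + 1)) (fun a b h => by simpa using h)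
    fun k => by simp [interleave, Nat.add_mod]

lemma IsEnum.comp_perm {s : ℕ → α} (h : IsEnum x0 S s) (σ : Equiv.Perm ℕ) :
    IsEnum x0 S (fun i => s (σ i)) := by
  intro x hx
  rw [h x hx, ← σ.symm.injective.encard_image]
  congr 1
  ext i
  simp

/-- Both enumerations have fibres of equal cardinality over every point, so the permutation is
assembled from bijections between corresponding fibres. -/
lemma IsEnum.exists_perm {s t : ℕ → α} (hs : IsEnum x0 S s) (ht : IsEnum x0 S t)
    (hs0 : {i | s i = x0}.Infinite) (ht0 : {i | t i = x0}.Infinite) :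
    ∃ σ : Equiv.Perm ℕ, ∀ i, s (σ i) = t i := by
  have hfib : ∀ x, {i | t i = x}.encard = {i | s i = x}.encard := fun x => by
    rcases eq_or_ne x x0 with rfl | hx
    · rw [Set.encard_eq_top_iff.2 hs0, Set.encard_eq_top_iff.2 ht0]
    · rw [← hs x hx, ← ht x hx]
  exact ⟨Equiv.ofFiberEquiv fun x => (nonempty_equiv_of_encard_eq (hfib x)).some,
    Equiv.ofFiberEquiv_map _⟩

end Enumerations

lemma dist_interleave (x0 : X) (s t : ℕ → X) (i : ℕ) :
    dist (interleave x0 s i) (interleave x0 t i) = interleave 0 (fun j => dist (s j) (t j)) i := by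
  unfold interleave; split_ifs <;> simp

section Pairings

variable {Φ : SymmetricNorm} {x0 : X} {A B : X → ℕ∞}

lemma dPhi_nonneg : 0 ≤ dPhi Φ x0 A B :=
  Real.sInf_nonneg (by rintro _ ⟨s, t, -, -, h, rfl⟩; exact Φ.ext_nonneg h)

lemma dPhi_le_ext {s t : ℕ → X} (hs : IsEnum x0 A s) (ht : IsEnum x0 B t)
    (h : MemLPhi Φ fun i => dist (s i) (t i)) :
    dPhi Φ x0 A B ≤ Φ.ext fun i => dist (s i) (t i) :=
  csInf_le ⟨0, by rintro _ ⟨s, t, -, -, h, rfl⟩; exact Φ.ext_nonneg h⟩ ⟨s, t, hs, ht, h, rfl⟩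

lemma exists_ext_dist_lt_of_dPhi_lt (hA : MemSPhi Φ x0 A) (hB : MemSPhi Φ x0 B) {ε : ℝ}
    (h : dPhi Φ x0 A B < ε) :
    ∃ s t : ℕ → X, IsEnum x0 A s ∧ IsEnum x0 B t ∧ MemLPhi Φ (fun i => dist (s i) (t i)) ∧
      Φ.ext (fun i => dist (s i) (t i)) < ε := by
  obtain ⟨-, s, hs, hs0⟩ := hA
  obtain ⟨-, t, ht, ht0⟩ := hB
  have hst := Φ.memLPhi_of_le_add
    (squeeze_zero (fun _ => dist_nonneg) (fun i => dist_triangle_left _ _ x0)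
      (by simpa using hs0.1.add ht0.1))
    (fun _ => dist_nonneg) (fun i => dist_triangle_left _ _ x0)
    (Φ.toFun_truncF_le_ext hs0) (Φ.toFun_truncF_le_ext ht0)
  obtain ⟨_, ⟨s, t, hs, ht, hst, rfl⟩, hlt⟩ :=
    exists_lt_of_csInf_lt (by exact ⟨_, s, t, hs, ht, hst.1, rfl⟩) h
  exact ⟨s, t, hs, ht, hst, hlt⟩

/-- Any two padded enumerations of the same multiset differ by a permutation of `ℕ`. -/
def IsPaddedEnum (Φ : SymmetricNorm) (x0 : X) (A : X → ℕ∞) (u : ℕ → X) : Prop :=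
  IsEnum x0 A u ∧ {i | u i = x0}.Infinite ∧ MemLPhi Φ fun i => dist x0 (u i)

lemma MemSPhi.exists_isPaddedEnum (h : MemSPhi Φ x0 A) : ∃ u, IsPaddedEnum Φ x0 A u := by
  obtain ⟨-, s, hs, hs0⟩ := h
  refine ⟨interleave x0 s, hs.interleave, infinite_setOf_interleave_eq x0 s, ?_⟩
  have : (fun i => dist x0 (interleave x0 s i)) = interleave 0 fun i => dist x0 (s i) := by
    ext i; unfold interleave; split_ifs <;> simp
  exact this ▸ (Φ.memLPhi_interleave_zero hs0).1

/-- A pairing of `A` with `B` can be transported to any padded enumeration `u` of `A`: pad both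
sides with basepoints, then permute them so that the padded enumeration of `A` becomes `u`. -/
lemma IsPaddedEnum.exists_ext_dist_lt {u : ℕ → X} (hu : IsPaddedEnum Φ x0 A u)
    (hA : MemSPhi Φ x0 A) (hB : MemSPhi Φ x0 B) {ε : ℝ} (h : dPhi Φ x0 A B < ε) :
    ∃ w, IsPaddedEnum Φ x0 B w ∧ MemLPhi Φ (fun i => dist (u i) (w i)) ∧
      Φ.ext (fun i => dist (u i) (w i)) < ε := by
  obtain ⟨huA, hu_inf, hu0⟩ := hu
  obtain ⟨s, t, hs, ht, hst, hlt⟩ := exists_ext_dist_lt_of_dPhi_lt hA hB h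
  obtain ⟨σ, hσ⟩ := hs.interleave.exists_perm huA (infinite_setOf_interleave_eq x0 s) hu_inf
  set w := fun i => interleave x0 t (σ i)
  have hdist : (fun i => dist (u i) (w i)) =
      fun i => interleave 0 (fun j => dist (s j) (t j)) (σ i) := by
    ext i; rw [← hσ i, dist_interleave]
  obtain ⟨hpad, hpad_ext⟩ := Φ.memLPhi_interleave_zero hst
  obtain ⟨huw, huw_ext⟩ := Φ.memLPhi_comp_perm hpad σ
  rw [← hdist] at huw huw_ext
  refine ⟨w, ⟨ht.interleave.comp_perm σ, ?_, ?_⟩, huw, by linarith⟩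
  · exact (infinite_setOf_interleave_eq x0 t).preimage fun i _ => ⟨σ.symm i, σ.apply_symm_apply i⟩
  · exact (Φ.memLPhi_of_le_add
      (squeeze_zero (fun _ => dist_nonneg) (fun i => dist_triangle _ (u i) _)
        (by simpa using hu0.1.add huw.1))
      (fun _ => dist_nonneg) (fun i => dist_triangle _ (u i) _)
      (Φ.toFun_truncF_le_ext hu0) (Φ.toFun_truncF_le_ext huw)).1

end Pairings

lemma tendsto_of_forall_dist_le {Y : Type*} [PseudoMetricSpace Y] {f : ℕ → ℕ → Y} {g : ℕ → Y}
    {y : Y} {δ : ℕ → ℝ} (hf : ∀ k, Tendsto (f k) atTop (nhds y)) (hδ : Tendsto δ atTop (nhds 0))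
    (hfg : ∀ k i, dist (g i) (f k i) ≤ δ k) : Tendsto g atTop (nhds y) :=
  TendstoUniformly.tendsto_of_eventually_tendsto
    (Metric.tendstoUniformly_iff.2 fun _ hε =>
      (hδ.eventually (gt_mem_nhds hε)).mono fun k hk i => (hfg k i).trans_lt hk)
    (Eventually.of_forall hf) tendsto_const_nhds

namespace SymmetricNorm

variable (Φ : SymmetricNorm)

lemma toFun_truncF_dist_le_of_tendsto {a v : ℕ → X} {w : ℕ → ℕ → X}
    (hw : ∀ i, Tendsto (fun K => w K i) atTop (nhds (v i))) {B : ℝ} {n : ℕ}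
    (hB : ∀ K, Φ.toFun (truncF (fun i => dist (a i) (w K i)) n) ≤ B) :
    Φ.toFun (truncF (fun i => dist (a i) (v i)) n) ≤ B := by
  have hlim : Tendsto (fun K => B + ∑ i ∈ Finset.range n, |dist (w K i) (v i)|) atTop
      (nhds B) := by
    simpa using (tendsto_const_nhds (x := B)).add <| tendsto_finsetSum (Finset.range n)
      fun i _ => ((hw i).dist (tendsto_const_nhds (x := v i))).abs
  refine ge_of_tendsto hlim (Eventually.of_forall fun K => ?_)
  calc Φ.toFun (truncF (fun i => dist (a i) (v i)) n)
      ≤ Φ.toFun (truncF (fun i => dist (a i) (w K i)) n) +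
          Φ.toFun (truncF (fun i => dist (w K i) (v i)) n) :=
        Φ.toFun_truncF_le_add (fun _ => dist_nonneg) (fun i => dist_triangle _ _ _) n
    _ ≤ _ := add_le_add (hB K) (Φ.toFun_truncF_le_sum_abs _ n)

lemma tendsto_dist_of_toFun_truncF_dist_le {x0 : X} {u : ℕ → ℕ → X} {v : ℕ → X} {δ : ℕ → ℝ}
    (hu : ∀ k, Tendsto (fun i => dist x0 (u k i)) atTop (nhds 0)) (hδ : Tendsto δ atTop (nhds 0))
    (huv : ∀ k n, Φ.toFun (truncF (fun i => dist (u k i) (v i)) n) ≤ δ k) :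
    Tendsto (fun i => dist x0 (v i)) atTop (nhds 0) :=
  tendsto_of_forall_dist_le hu hδ fun k i => by
    rw [Real.dist_eq, dist_comm x0, dist_comm x0]
    exact (abs_dist_sub_le _ _ _).trans <| (dist_comm _ _).trans_le <| (le_abs_self _).trans <|
      (Φ.abs_le_toFun_truncF (fun i => dist (u k i) (v i)) i.lt_succ_self).trans (huv k (i + 1))

variable {Φ}

lemma toFun_truncF_dist_le_of_le_geometric {u : ℕ → ℕ → X}
    (hu : ∀ k n, Φ.toFun (truncF (fun i => dist (u k i) (u (k + 1) i)) n) ≤ (1 / 2) ^ k)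
    (k K n : ℕ) :
    Φ.toFun (truncF (fun i => dist (u k i) (u (k + K) i)) n) ≤
      2 * (1 / 2) ^ k - 2 * (1 / 2) ^ (k + K) := by
  induction K with
  | zero => simp [truncF, Φ.toFun_zero]
  | succ K ih =>
    calc _ ≤ Φ.toFun (truncF (fun i => dist (u k i) (u (k + K) i)) n) +
          Φ.toFun (truncF (fun i => dist (u (k + K) i) (u (k + K + 1) i)) n) :=
          Φ.toFun_truncF_le_add (fun _ => dist_nonneg) (fun i => dist_triangle _ _ _) n
      _ ≤ 2 * (1 / 2) ^ k - 2 * (1 / 2) ^ (k + K) + (1 / 2) ^ (k + K) := add_le_add ih (hu _ n)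
      _ = _ := by ring

lemma exists_toFun_truncF_dist_le_of_le_geometric [CompleteSpace X] {u : ℕ → ℕ → X}
    (hu : ∀ k n, Φ.toFun (truncF (fun i => dist (u k i) (u (k + 1) i)) n) ≤ (1 / 2) ^ k) :
    ∃ v : ℕ → X, ∀ k n, Φ.toFun (truncF (fun i => dist (u k i) (v i)) n) ≤ 2 * (1 / 2) ^ k := by
  have hcauchy : ∀ i, CauchySeq fun k => u k i := fun i =>
    cauchySeq_of_le_geometric (1 / 2) 1 (by norm_num) fun k => by
      simpa using (Φ.abs_le_toFun_truncF _ i.lt_succ_self).trans (hu k (i + 1))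
  choose v hv using fun i => cauchySeq_tendsto_of_complete (hcauchy i)
  refine ⟨v, fun k n => Φ.toFun_truncF_dist_le_of_tendsto
    (w := fun K => u (k + K)) (fun i => ((hv i).comp (tendsto_add_atTop_nat k)).congr
      fun K => by rw [Function.comp_apply, add_comm]) fun K => ?_⟩
  have := toFun_truncF_dist_le_of_le_geometric hu k K n
  have : (0 : ℝ) ≤ 2 * (1 / 2) ^ (k + K) := by positivity
  linarith

end SymmetricNorm

noncomputable def multisetOfEnum {α : Type*} (x0 : α) (v : ℕ → α) : α → ℕ∞ :=
  fun x => if x = x0 then ⊤ else {i | v i = x}.encard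

lemma isEnum_multisetOfEnum {α : Type*} (x0 : α) (v : ℕ → α) :
    IsEnum x0 (multisetOfEnum x0 v) v :=
  fun _ hx => if_neg hx

section Completeness

variable {Φ : SymmetricNorm} {x0 : X}

lemma memSPhi_multisetOfEnum {v : ℕ → X} (hv : MemLPhi Φ fun i => dist x0 (v i)) :
    MemSPhi Φ x0 (multisetOfEnum x0 v) := by
  have hv0 : Tendsto v atTop (nhds x0) := by
    simpa [tendsto_iff_dist_tendsto_zero, dist_comm] using hv.1
  refine ⟨⟨if_pos rfl, fun x hx => ?_, ?_⟩, v, isEnum_multisetOfEnum x0 v, hv⟩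
  · rw [multisetOfEnum, if_neg hx, Ne, Set.encard_eq_top_iff, Set.not_infinite]
    have : ∀ᶠ i in cofinite, v i ≠ x := by
      rw [Nat.cofinite_eq_atTop]; exact hv0.eventually_ne (Ne.symm hx)
    simpa using Filter.eventually_cofinite.1 this
  · refine ((Set.countable_range v).insert x0).mono fun x hx => ?_
    by_cases h : x = x0
    · exact Or.inl h
    · simp only [multisetOfEnum, if_neg h, Set.mem_ofPred_eq, Ne, Set.encard_eq_zero] at hx
      obtain ⟨i, hi⟩ := Set.nonempty_iff_ne_empty.2 hx
      exact Or.inr ⟨i, hi⟩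

variable {A B : X → ℕ∞}

lemma IsPaddedEnum.dPhi_le {C : X → ℕ∞} {u v : ℕ → X} (hu : IsPaddedEnum Φ x0 A u)
    (hA : MemSPhi Φ x0 A) (hB : MemSPhi Φ x0 B) (hv : IsEnum x0 C v)
    (hv0 : Tendsto (fun i => dist x0 (v i)) atTop (nhds 0)) {δ ε : ℝ}
    (huv : ∀ n, Φ.toFun (truncF (fun i => dist (u i) (v i)) n) ≤ δ) (h : dPhi Φ x0 A B < ε) :
    dPhi Φ x0 B C ≤ ε + δ := by
  obtain ⟨w, hw, huw, hlt⟩ := hu.exists_ext_dist_lt hA hB h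
  have hwv := Φ.memLPhi_of_le_add
    (squeeze_zero (fun _ => dist_nonneg) (fun i => dist_triangle_left (w i) (v i) x0)
      (by simpa using hw.2.2.1.add hv0))
    (fun _ => dist_nonneg) (fun i => dist_triangle_left _ _ (u i)) (Φ.toFun_truncF_le_ext huw) huv
  calc dPhi Φ x0 B C ≤ Φ.ext fun i => dist (w i) (v i) := dPhi_le_ext hw.1 hv hwv.1
    _ ≤ ε + δ := by linarith [hwv.2]

lemma exists_isPaddedEnum_seq {T : ℕ → X → ℕ∞} (hT : ∀ k, MemSPhi Φ x0 (T k))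
    (hd : ∀ k, dPhi Φ x0 (T k) (T (k + 1)) < (1 / 2) ^ k) :
    ∃ u : ℕ → ℕ → X, (∀ k, IsPaddedEnum Φ x0 (T k) (u k)) ∧
      ∀ k n, Φ.toFun (truncF (fun i => dist (u k i) (u (k + 1) i)) n) ≤ (1 / 2) ^ k := by
  choose! next hnext using fun k (f : ℕ → X) (hf : IsPaddedEnum Φ x0 (T k) f) =>
    hf.exists_ext_dist_lt (hT k) (hT (k + 1)) (hd k)
  obtain ⟨u₀, hu₀⟩ := (hT 0).exists_isPaddedEnum
  let u : ℕ → ℕ → X := fun k => Nat.rec u₀ next k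
  have hu : ∀ k, IsPaddedEnum Φ x0 (T k) (u k) := fun k => by
    induction k with
    | zero => exact hu₀
    | succ k ih => exact (hnext k _ ih).1
  exact ⟨u, hu, fun k n =>
    (Φ.toFun_truncF_le_ext (hnext k _ (hu k)).2.1 n).trans (hnext k _ (hu k)).2.2.le⟩

end Completeness

open Filter in
theorem sPhi_complete_general [CompleteSpace X] (x0 : X) (Φ : SymmetricNorm)
    (S : ℕ → X → ℕ∞) (hS : ∀ n, MemSPhi Φ x0 (S n))
    (hcauchy : ∀ ε > 0, ∃ N, ∀ m ≥ N, ∀ n ≥ N, dPhi Φ x0 (S m) (S n) < ε) :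
    ∃ L, MemSPhi Φ x0 L ∧
      Tendsto (fun n => dPhi Φ x0 (S n) L) atTop (nhds 0) := by
  obtain ⟨φ, hφ_mono, hφ⟩ := extraction_forall_of_eventually
    (P := fun k m => ∀ n ≥ m, dPhi Φ x0 (S m) (S n) < (1 / 2) ^ k) fun k => by
      obtain ⟨N, hN⟩ := hcauchy _ (by positivity : (0 : ℝ) < (1 / 2) ^ k)
      exact eventually_atTop.2 ⟨N, fun m hm n hn => hN m hm n (hm.trans hn)⟩
  obtain ⟨u, hu, hstep⟩ := exists_isPaddedEnum_seq (fun k => hS (φ k))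
    fun k => hφ k _ (hφ_mono.monotone k.le_succ)
  obtain ⟨v, hv⟩ := Φ.exists_toFun_truncF_dist_le_of_le_geometric hstep
  have hv0 : Tendsto (fun i => dist x0 (v i)) atTop (nhds 0) :=
    Φ.tendsto_dist_of_toFun_truncF_dist_le (fun k => (hu k).2.2.1)
      (by simpa using (tendsto_pow_atTop_nhds_zero_of_lt_one (by norm_num : (0 : ℝ) ≤ 1 / 2)
        (by norm_num)).const_mul 2) hv
  refine ⟨multisetOfEnum x0 v, memSPhi_multisetOfEnum (Φ.memLPhi_of_le_add hv0
    (fun _ => dist_nonneg) (fun i => dist_triangle x0 (u 0 i) (v i))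
    (Φ.toFun_truncF_le_ext (hu 0).2.2) (hv 0)).1, ?_⟩
  rw [Metric.tendsto_atTop]
  intro ε hε
  obtain ⟨k, hk⟩ := exists_pow_lt_of_lt_one (by positivity : 0 < ε / 3)
    (by norm_num : (1 / 2 : ℝ) < 1)
  refine ⟨φ k, fun n hn => ?_⟩
  have := (hu k).dPhi_le (hS _) (hS n) (isEnum_multisetOfEnum x0 v) hv0 (hv k) (hφ k n hn)
  rw [Real.dist_eq, sub_zero, abs_of_nonneg dPhi_nonneg]
  linarith

open Filter in
/-- If `(X, d)` is a complete metric space and `Φ` is a regular symmetric norm,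
then `S_Φ(X, x₀)` is complete: every `d_Φ`-Cauchy sequence of `Φ`-summable
multisets converges to a `Φ`-summable multiset. -/
theorem sPhi_complete [CompleteSpace X] (x0 : X) (Φ : SymmetricNorm)
    (hΦ : Φ.Regular) (S : ℕ → X → ℕ∞) (hS : ∀ n, MemSPhi Φ x0 (S n))
    (hcauchy : ∀ ε > 0, ∃ N, ∀ m ≥ N, ∀ n ≥ N, dPhi Φ x0 (S m) (S n) < ε) :
    ∃ L, MemSPhi Φ x0 L ∧
      Tendsto (fun n => dPhi Φ x0 (S n) L) atTop (nhds 0) :=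
  sPhi_complete_general x0 Φ S hS hcauchy
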